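/- Let H be a complex Hilbert space and let (g_k)_{k∈K} be a frame for H indexed by a countable set K. Then the family of squared norms (‖g_k‖²)_{k∈K} is summable (i.e., Σ_{k∈K} ‖g_k‖² < ∞) if and only if H is finite-dimensional. -/

import Mathlib

/-!
Expanding each `‖g k‖²` by Parseval in a Hilbert basis `(e i)` and swapping the order of
summation gives `∑ k, ‖g k‖² = ∑ i, ∑ k, ‖⟪e i, g k⟫‖²`. The lower frame bound makes every inner
sum at least `A > 0`, so a summable left-hand side forces the basis to be finite. Conversely, in
finite dimension `‖g k‖²` is a finite sum of the `‖⟪g k, e i⟫‖²`, each summable in `k`.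
-/

open scoped ComplexInnerProductSpace

/-- A family `g` in a complex Hilbert space is a frame:
there are `A, B > 0` with `A‖f‖² ≤ Σ_k |⟨f, g_k⟩|² ≤ B‖f‖²` for all `f`
(the sums being convergent). -/
def IsFrame {H : Type*} [NormedAddCommGroup H] [InnerProductSpace ℂ H]
    {K : Type*} (g : K → H) : Prop :=
  ∃ A B : ℝ, 0 < A ∧ 0 < B ∧ ∀ f : H,
    Summable (fun k => ‖⟪g k, f⟫‖ ^ 2) ∧
    A * ‖f‖ ^ 2 ≤ ∑' k, ‖⟪g k, f⟫‖ ^ 2 ∧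
    ∑' k, ‖⟪g k, f⟫‖ ^ 2 ≤ B * ‖f‖ ^ 2

theorem Summable.finite_of_forall_le {ι : Type*} {f : ι → ℝ} (hf : Summable f) {A : ℝ}
    (hA : 0 < A) (hAf : ∀ i, A ≤ f i) : Finite ι := by
  by_contra hinf
  have : Infinite ι := not_finite_iff_infinite.mp hinf
  have hconst : Summable fun _ : ι => A := hf.of_nonneg_of_le (fun _ => hA.le) hAf
  exact hA.ne' ((summable_const_iff A).mp hconst)

section

variable {𝕜 H ι K : Type*} [RCLike 𝕜] [NormedAddCommGroup H] [InnerProductSpace 𝕜 H]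

theorem HilbertBasis.hasSum_norm_inner_sq [CompleteSpace H] (b : HilbertBasis ι 𝕜 H) (x : H) :
    HasSum (fun i => ‖inner 𝕜 (b i) x‖ ^ 2) (‖x‖ ^ 2) := by
  simpa [b.repr_apply_apply] using lp.hasSum_norm (p := 2) (by norm_num) (b.repr x)

theorem HilbertBasis.finiteDimensional [Finite ι] (b : HilbertBasis ι 𝕜 H) :
    FiniteDimensional 𝕜 H :=
  have := Fintype.ofFinite ι
  Module.Finite.of_basis b.toOrthonormalBasis.toBasis

theorem HilbertBasis.summable_tsum_norm_inner_sq [CompleteSpace H] (b : HilbertBasis ι 𝕜 H)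
    {g : K → H} (hg : Summable fun k => ‖g k‖ ^ 2) :
    Summable fun i => ∑' k, ‖inner 𝕜 (b i) (g k)‖ ^ 2 := by
  have hjoint : Summable fun p : K × ι => ‖inner 𝕜 (b p.2) (g p.1)‖ ^ 2 := by
    refine (summable_prod_of_nonneg fun _ => by positivity).mpr
      ⟨fun k => (b.hasSum_norm_inner_sq (g k)).summable, ?_⟩
    simpa only [fun k => (b.hasSum_norm_inner_sq (g k)).tsum_eq] using hg
  exact ((summable_prod_of_nonneg fun _ => by positivity).mp hjoint.prod_symm).2

theorem summable_norm_sq_of_forall_summable_norm_inner_sq [FiniteDimensional 𝕜 H] {g : K → H}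
    (hg : ∀ f, Summable fun k => ‖inner 𝕜 (g k) f‖ ^ 2) : Summable fun k => ‖g k‖ ^ 2 := by
  let b := stdOrthonormalBasis 𝕜 H
  simp only [← b.sum_sq_norm_inner_left]
  exact summable_sum fun i _ => hg (b i)

end

theorem summable_norm_sq_of_frame_iff_finiteDimensional_general
    {H : Type*} [NormedAddCommGroup H] [InnerProductSpace ℂ H] [CompleteSpace H]
    {K : Type*} (g : K → H) (hg : IsFrame g) :
    Summable (fun k => ‖g k‖ ^ 2) ↔ FiniteDimensional ℂ H := by
  obtain ⟨A, _, hA, -, hframe⟩ := hg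
  constructor
  · intro hsum
    obtain ⟨w, b, -⟩ := exists_hilbertBasis ℂ H
    have hlower : ∀ i, A ≤ ∑' k, ‖⟪b i, g k⟫‖ ^ 2 := fun i => by
      simpa only [b.orthonormal.1 i, one_pow, mul_one, norm_inner_symm] using (hframe (b i)).2.1
    have := (b.summable_tsum_norm_inner_sq hsum).finite_of_forall_le hA hlower
    exact b.finiteDimensional
  · intro _
    exact summable_norm_sq_of_forall_summable_norm_inner_sq fun f => (hframe f).1

/-- For a frame `(g_k)_{k∈K}` (K countable) of a complex Hilbert space `H`, the
family `(‖g_k‖²)_k` is summable iff `H` is finite-dimensional. -/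
theorem summable_norm_sq_of_frame_iff_finiteDimensional
    {H : Type*} [NormedAddCommGroup H] [InnerProductSpace ℂ H] [CompleteSpace H]
    {K : Type*} [Countable K] (g : K → H) (hg : IsFrame g) :
    Summable (fun k => ‖g k‖ ^ 2) ↔ FiniteDimensional ℂ H :=
  summable_norm_sq_of_frame_iff_finiteDimensional_general g hg
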